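/- (Achievability for the SPIR capacity region.) For all integers K ≥ 2, N ≥ 2 and all positive integers l_1 ≤ l_2 ≤ ⋯ ≤ l_K, there exists a zero-error SPIR scheme with unequal message sizes, with L = N − 1, total download D = l_K · N bits, and common randomness entropy H(S) = l_K bits; hence it achieves the rate tuple R_k = l_k L / D = (l_k / l_K)(1 − 1/N) for all k, with relative common randomness ρ = H(S)/(l_K L) = 1/(N − 1). -/
import Mathlib


open Finset

attribute [local instance] Classical.propDecidable

/-- Probability that the random variable `X` takes the value `a`, on a finite
sample space `Ω` with probability mass function `p`. -/
noncomputable def prob {Ω α : Type*} [Fintype Ω] (p : Ω → ℝ) (X : Ω → α) (a : α) : ℝ :=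
  ∑ ω : Ω, if X ω = a then p ω else 0

/-- Shannon entropy (in bits) of the random variable `X`. -/
noncomputable def ent {Ω α : Type*} [Fintype Ω] [Fintype α] (p : Ω → ℝ) (X : Ω → α) : ℝ :=
  - ∑ a : α, prob p X a * Real.logb 2 (prob p X a)

/-- Conditional Shannon entropy (in bits) `H(X | Y)`. -/
noncomputable def condEnt {Ω α β : Type*} [Fintype Ω] [Fintype α] [Fintype β]
    (p : Ω → ℝ) (X : Ω → α) (Y : Ω → β) : ℝ :=
  ent p (fun ω => (X ω, Y ω)) - ent p Y

/-- Shannon mutual information (in bits) `I(X ; Y)`. -/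
noncomputable def mutInfo {Ω α β : Type*} [Fintype Ω] [Fintype α] [Fintype β]
    (p : Ω → ℝ) (X : Ω → α) (Y : Ω → β) : ℝ :=
  ent p X + ent p Y - ent p (fun ω => (X ω, Y ω))

/-- `X` and `Y` are identically distributed. -/
def IdentDist {Ω α : Type*} [Fintype Ω] (p : Ω → ℝ) (X Y : Ω → α) : Prop :=
  ∀ a : α, prob p X a = prob p Y a

/-- `X` is uniformly distributed on `α`. -/
def Unif {Ω α : Type*} [Fintype Ω] [Fintype α] (p : Ω → ℝ) (X : Ω → α) : Prop :=
  ∀ a : α, prob p X a = 1 / (Fintype.card α : ℝ)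

/-- A zero-error SPIR scheme with `K` messages and `N` databases in which the answer of
database `n` consists of `d n` bits (so the total download is `D = ∑ n, d n` bits). -/
structure RegionSPIR (K N L : ℕ) (l : Fin K → ℕ) (d : Fin N → ℕ) where
  /-- the finite sample space -/
  Ω : Type
  [instΩ : Fintype Ω]
  /-- the probability mass function -/
  p : Ω → ℝ
  p_nonneg : ∀ ω, 0 ≤ p ω
  p_sum : ∑ ω : Ω, p ω = 1
  /-- value type of the common randomness -/
  𝓢 : Type
  [inst𝓢 : Fintype 𝓢]
  /-- value type of the user randomness -/
  𝓕 : Type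
  [inst𝓕 : Fintype 𝓕]
  /-- value types of the queries -/
  𝓠 : Fin N → Type
  [inst𝓠 : ∀ n, Fintype (𝓠 n)]
  /-- the messages -/
  W : ∀ k : Fin K, Ω → (Fin (l k * L) → ZMod 2)
  /-- the common randomness -/
  S : Ω → 𝓢
  /-- the user randomness -/
  F : Ω → 𝓕
  /-- the queries -/
  Q : ∀ (_ : Fin K) (n : Fin N), Ω → 𝓠 n
  /-- the answers: `d n` bits from database `n` -/
  A : ∀ (_ : Fin K) (n : Fin N), Ω → (Fin (d n) → ZMod 2)
  /-- each message is uniformly distributed on the set of bit strings of its length -/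
  hWunif : ∀ k, Unif p (W k)
  /-- the messages, the common randomness and the user randomness are mutually
  independent -/
  hIndep : ∀ (w : ∀ k : Fin K, Fin (l k * L) → ZMod 2) (s : 𝓢) (f : 𝓕),
    prob p (fun ω => ((fun k => W k ω), S ω, F ω)) (w, s, f)
      = (∏ k, prob p (W k) (w k)) * prob p S s * prob p F f
  /-- each query is a deterministic function of `F` -/
  hQ : ∀ k n, ∃ g : 𝓕 → 𝓠 n, ∀ ω, Q k n ω = g (F ω)
  /-- each answer is a deterministic function of the query, the messages and `S` -/
  hA : ∀ k n, ∃ g : 𝓠 n → (∀ k : Fin K, Fin (l k * L) → ZMod 2) → 𝓢 → (Fin (d n) → ZMod 2),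
    ∀ ω, A k n ω = g (Q k n ω) (fun j => W j ω) (S ω)
  /-- correctness: `W_k` is a deterministic function of the answers and `F` -/
  hCorrect : ∀ k, ∃ g : (∀ n, Fin (d n) → ZMod 2) → 𝓕 → (Fin (l k * L) → ZMod 2),
    ∀ ω, W k ω = g (fun n => A k n ω) (F ω)
  /-- user-privacy -/
  hUserPriv : ∀ (n : Fin N) (k k' : Fin K),
    IdentDist p (fun ω => (Q k n ω, A k n ω, (fun j => W j ω), S ω))
                (fun ω => (Q k' n ω, A k' n ω, (fun j => W j ω), S ω))
  /-- database-privacy -/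
  hDBPriv : ∀ k : Fin K,
    mutInfo p (fun ω => (fun j : {j : Fin K // j ≠ k} => W j.1 ω))
      (fun ω => ((fun n => Q k n ω), (fun n => A k n ω), F ω)) = 0

attribute [instance] RegionSPIR.instΩ RegionSPIR.inst𝓢 RegionSPIR.inst𝓕 RegionSPIR.inst𝓠

section Auxiliary

namespace SPIRAux

lemma prob_eq_single {Ω α : Type*} [Fintype Ω] (p : Ω → ℝ) (X : Ω → α) (a : α) (ω₀ : Ω)
    (h : ∀ ω, X ω = a ↔ ω = ω₀) : prob p X a = p ω₀ := by
  unfold prob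
  rw [Finset.sum_eq_single ω₀ (fun b _ hb => if_neg (fun hX => hb ((h b).1 hX)))
      (fun ha => absurd (Finset.mem_univ ω₀) ha)]
  exact if_pos ((h ω₀).2 rfl)

lemma prob_eq_zero {Ω α : Type*} [Fintype Ω] (p : Ω → ℝ) (X : Ω → α) (a : α)
    (h : ∀ ω, X ω ≠ a) : prob p X a = 0 :=
  Finset.sum_eq_zero (fun ω _ => if_neg (h ω))

lemma sum_if_eq {α : Type*} [Fintype α] {P : α → Prop} [∀ x, Decidable (P x)] (a : α) (r : ℝ)
    (h : ∀ x, P x ↔ x = a) : (∑ x : α, if P x then r else 0) = r := by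
  rw [Finset.sum_eq_single a (fun b _ hb => if_neg (fun hP => hb ((h b).1 hP)))
      (fun ha => absurd (Finset.mem_univ a) ha)]
  exact if_pos ((h a).2 rfl)

lemma sum_ite_const {Y : Type*} [Fintype Y] (P : Prop) [Decidable P] (c : ℝ) :
    (∑ _y : Y, if P then c else 0) = if P then (Fintype.card Y : ℝ) * c else 0 := by
  split_ifs <;> simp [Finset.sum_const, Finset.card_univ, nsmul_eq_mul]

lemma sum_prob {Ω α : Type*} [Fintype Ω] [Fintype α] (p : Ω → ℝ) (X : Ω → α) :
    ∑ a, prob p X a = ∑ ω, p ω := by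
  unfold prob
  rw [Finset.sum_comm]
  exact Finset.sum_congr rfl fun ω _ => sum_if_eq (X ω) (p ω) (fun x => eq_comm)

lemma mutInfo_eq_zero_of_indep {Ω α β : Type*} [Fintype Ω] [Fintype α] [Fintype β]
    (p : Ω → ℝ) (X : Ω → α) (Y : Ω → β) (hp : ∑ ω, p ω = 1)
    (h : ∀ x y, prob p (fun ω => (X ω, Y ω)) (x, y) = prob p X x * prob p Y y) :
    mutInfo p X Y = 0 := by
  have hX : ∑ x, prob p X x = 1 := (sum_prob p X).trans hp
  have hY : ∑ y, prob p Y y = 1 := (sum_prob p Y).trans hp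
  have hent : ent p (fun ω => (X ω, Y ω)) = ent p X + ent p Y := by
    unfold ent
    rw [Fintype.sum_prod_type]
    have key : ∀ x y,
        prob p (fun ω => (X ω, Y ω)) (x, y) * Real.logb 2 (prob p (fun ω => (X ω, Y ω)) (x, y))
        = prob p Y y * (prob p X x * Real.logb 2 (prob p X x))
          + prob p X x * (prob p Y y * Real.logb 2 (prob p Y y)) := by
      intro x y
      rw [h]
      by_cases hx : prob p X x = 0
      · simp [hx]
      by_cases hy : prob p Y y = 0
      · simp [hy]
      rw [Real.logb_mul hx hy]; ring
    have step1 : ∑ x, ∑ y,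
        prob p (fun ω => (X ω, Y ω)) (x, y) * Real.logb 2 (prob p (fun ω => (X ω, Y ω)) (x, y))
        = ∑ x, (prob p X x * Real.logb 2 (prob p X x)
            + prob p X x * ∑ y, prob p Y y * Real.logb 2 (prob p Y y)) := by
      refine Finset.sum_congr rfl fun x _ => ?_
      rw [Finset.sum_congr rfl fun y _ => key x y, Finset.sum_add_distrib,
        ← Finset.sum_mul, ← Finset.mul_sum, hY, one_mul]
    rw [step1, Finset.sum_add_distrib, ← Finset.sum_mul, hX, one_mul]
    ring
  unfold mutInfo
  rw [hent]; ring

lemma sum_split {K : ℕ} (β : Fin K → Type*) [∀ j, Fintype (β j)] (k : Fin K)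
    (f : (∀ j, β j) → ℝ) :
    ∑ w : ∀ j, β j, f w
      = ∑ b : β k, ∑ r : ∀ j : {j // j ≠ k}, β j.1, f ((Equiv.piSplitAt k β).symm (b, r)) := by
  rw [← Equiv.sum_comp (Equiv.piSplitAt k β).symm f, Fintype.sum_prod_type]

lemma piSplitAt_symm_same {K : ℕ} (β : Fin K → Type*) (k : Fin K) (b : β k)
    (r : ∀ j : {j // j ≠ k}, β j.1) : (Equiv.piSplitAt k β).symm (b, r) k = b := by
  simp [Equiv.piSplitAt]

lemma piSplitAt_symm_other {K : ℕ} (β : Fin K → Type*) (k : Fin K) (b : β k)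
    (r : ∀ j : {j // j ≠ k}, β j.1) (j : Fin K) (hj : j ≠ k) :
    (Equiv.piSplitAt k β).symm (b, r) j = r ⟨j, hj⟩ := by
  simp [Equiv.piSplitAt, dif_neg hj]

lemma piSplitAt_symm_sub {K : ℕ} (β : Fin K → Type*) (k : Fin K) (b : β k)
    (r : ∀ j : {j // j ≠ k}, β j.1) :
    (fun j : {j // j ≠ k} => (Equiv.piSplitAt k β).symm (b, r) j.1) = r := by
  funext j
  rw [piSplitAt_symm_other β k b r j.1 j.2]

lemma sum_pi_ite {K : ℕ} (β : Fin K → Type*) [∀ j, Fintype (β j)] (k : Fin K) (a : β k)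
    (c : ℝ) :
    (∑ w : ∀ j, β j, @ite _ (w k = a) (Classical.propDecidable _) c 0)
      = (Fintype.card (∀ j : {j // j ≠ k}, β j.1) : ℝ) * c := by
  rw [sum_split β k]
  have h1 : ∀ (b : β k) (r : ∀ j : {j // j ≠ k}, β j.1),
      (@ite _ ((Equiv.piSplitAt k β).symm (b, r) k = a) (Classical.propDecidable _) c 0)
        = if b = a then c else 0 := by
    intro b r
    by_cases hb : b = a
    · rw [if_pos hb, if_pos (by rw [piSplitAt_symm_same, hb])]
    · rw [if_neg hb, if_neg (fun hh => hb (by rw [← piSplitAt_symm_same β k b r]; exact hh))]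
  calc ∑ b : β k, ∑ r : ∀ j : {j // j ≠ k}, β j.1,
        (@ite _ ((Equiv.piSplitAt k β).symm (b, r) k = a) (Classical.propDecidable _) c 0)
      = ∑ b : β k, ∑ _r : ∀ j : {j // j ≠ k}, β j.1, (if b = a then c else 0) :=
        Finset.sum_congr rfl fun b _ => Finset.sum_congr rfl fun r _ => h1 b r
    _ = ∑ b : β k, (if b = a then (Fintype.card (∀ j : {j // j ≠ k}, β j.1) : ℝ) * c else 0) := by
        refine Finset.sum_congr rfl fun b _ => ?_
        rw [sum_ite_const]
    _ = _ := sum_if_eq a _ (fun x => Iff.rfl)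

lemma sum_pi_ite_sub {K : ℕ} (β : Fin K → Type*) [∀ j, Fintype (β j)] (k : Fin K)
    (x : ∀ j : {j // j ≠ k}, β j.1) (c : ℝ) :
    (∑ w : ∀ j, β j, @ite _ ((fun j : {j // j ≠ k} => w j.1) = x) (Classical.propDecidable _) c 0)
      = (Fintype.card (β k) : ℝ) * c := by
  rw [sum_split β k]
  calc ∑ b : β k, ∑ r : ∀ j : {j // j ≠ k}, β j.1,
        (@ite _ ((fun j : {j // j ≠ k} => (Equiv.piSplitAt k β).symm (b, r) j.1) = x)
          (Classical.propDecidable _) c 0)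
      = ∑ b : β k, ∑ r : ∀ j : {j // j ≠ k}, β j.1, (if r = x then c else 0) := by
        refine Finset.sum_congr rfl fun b _ => Finset.sum_congr rfl fun r _ => ?_
        by_cases hr : r = x
        · rw [if_pos hr, if_pos (by rw [piSplitAt_symm_sub, hr])]
        · rw [if_neg hr,
            if_neg (fun hh => hr (by rw [← piSplitAt_symm_sub β k b r]; exact hh))]
    _ = ∑ _b : β k, c := Finset.sum_congr rfl fun b _ => sum_if_eq x c (fun r => Iff.rfl)
    _ = _ := by simp [Finset.sum_const, Finset.card_univ, nsmul_eq_mul]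

lemma sum_om_ite {A B C : Type*} [Fintype A] [Fintype B] [Fintype C]
    (P : A → Prop) (g : A → B) (c0 : C) (c : ℝ) :
    (∑ ω : A × B × C, @ite _ (P ω.1 ∧ ω.2.1 = g ω.1 ∧ ω.2.2 = c0) (Classical.propDecidable _) c 0)
      = ∑ a : A, @ite _ (P a) (Classical.propDecidable _) c 0 := by
  classical
  rw [Fintype.sum_prod_type]
  refine Finset.sum_congr rfl fun a _ => ?_
  rw [Fintype.sum_prod_type]
  have inner : ∀ b : B, (∑ cc : C, @ite _ (P a ∧ b = g a ∧ cc = c0) (Classical.propDecidable _) c 0)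
      = if P a ∧ b = g a then c else 0 := by
    intro b
    by_cases h : P a ∧ b = g a
    · rw [if_pos h]
      exact @sum_if_eq C _ _ (fun cc => Classical.propDecidable _) c0 c
        (fun cc => ⟨fun hh => hh.2.2, fun hh => ⟨h.1, h.2, hh⟩⟩)
    · rw [if_neg h]
      exact Finset.sum_eq_zero fun cc _ => if_neg (fun hh => h ⟨hh.1, hh.2.1⟩)
  rw [Finset.sum_congr rfl fun b _ => inner b]
  by_cases hP : P a
  · rw [if_pos hP]
    exact sum_if_eq (g a) c fun b => ⟨fun hh => hh.2, fun hh => ⟨hP, hh⟩⟩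
  · rw [if_neg hP]
    exact Finset.sum_eq_zero fun b _ => if_neg (fun hh => hP hh.1)

lemma sum_om_ite_fst {A B C : Type*} [Fintype A] [Fintype B] [Fintype C]
    (P : A → Prop) (c : ℝ) :
    (∑ ω : A × B × C, @ite _ (P ω.1) (Classical.propDecidable _) c 0)
      = ∑ a : A, @ite _ (P a) (Classical.propDecidable _) ((Fintype.card (B × C) : ℝ) * c) 0 := by
  rw [Fintype.sum_prod_type]
  exact Finset.sum_congr rfl fun a _ => sum_ite_const (P a) c

lemma sum_om_ite_snd {A B C : Type*} [Fintype A] [Fintype B] [Fintype C] (b0 : B) (c : ℝ) :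
    (∑ ω : A × B × C, @ite _ (ω.2.1 = b0) (Classical.propDecidable _) c 0)
      = (Fintype.card A : ℝ) * ((Fintype.card C : ℝ) * c) := by
  classical
  rw [Fintype.sum_prod_type]
  have inner : (∑ y : B × C, if y.1 = b0 then c else 0)
      = (Fintype.card C : ℝ) * c := by
    rw [Fintype.sum_prod_type]
    have h2 : ∀ b : B, (∑ _cc : C, if b = b0 then c else 0)
        = if b = b0 then (Fintype.card C : ℝ) * c else 0 := fun b => sum_ite_const _ c
    rw [Finset.sum_congr rfl fun b _ => h2 b]
    exact sum_if_eq b0 _ fun b => Iff.rfl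
  rw [Finset.sum_congr rfl fun a (_ : a ∈ Finset.univ) => inner]
  simp [Finset.sum_const, Finset.card_univ, nsmul_eq_mul]

lemma sum_om_ite_trd {A B C : Type*} [Fintype A] [Fintype B] [Fintype C] (c0 : C) (c : ℝ) :
    (∑ ω : A × B × C, @ite _ (ω.2.2 = c0) (Classical.propDecidable _) c 0)
      = (Fintype.card A : ℝ) * ((Fintype.card B : ℝ) * c) := by
  classical
  rw [Fintype.sum_prod_type]
  have inner : (∑ y : B × C, if y.2 = c0 then c else 0)
      = (Fintype.card B : ℝ) * c := by
    rw [Fintype.sum_prod_type]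
    have h2 : ∀ b : B, (∑ cc : C, if cc = c0 then c else 0) = c :=
      fun b => sum_if_eq c0 _ fun cc => Iff.rfl
    rw [Finset.sum_congr rfl fun b _ => h2 b]
    simp [Finset.sum_const, Finset.card_univ, nsmul_eq_mul]
  rw [Finset.sum_congr rfl fun a (_ : a ∈ Finset.univ) => inner]
  simp [Finset.sum_const, Finset.card_univ, nsmul_eq_mul]

lemma z2a (x y : ZMod 2) : x + y + y = x := by revert x y; decide
lemma z2b (x s a : ZMod 2) (h : x + 0 + s = a) : s = a + x := by revert h; revert x s a; decide
lemma z2c (x p aL a : ZMod 2) (h : x + p + (aL + x) = a) : p = a + aL := by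
  revert h; revert x p aL a; decide
lemma z2d (x an aL : ZMod 2) : x + (an + aL) + (aL + x) = an := by revert x an aL; decide
lemma z2e (x aL : ZMod 2) : x + 0 + (aL + x) = aL := by revert x aL; decide
lemma z2f (x p s : ZMod 2) : (x + p + s) + (x + 0 + s) = p := by revert x p s; decide

end SPIRAux

end Auxiliary
namespace SPIRAch

open SPIRAux

/-- padded message: block `j`, bit `t` -/
def padW {K : ℕ} (l : Fin K → ℕ) (N M : ℕ) (k : Fin K) (w : Fin (l k * (N - 1)) → ZMod 2)
    (j : Fin (N - 1)) (t : Fin M) : ZMod 2 :=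
  if h : (t : ℕ) < l k then
    w ⟨(j : ℕ) * l k + t, by
      have hj := j.isLt
      calc (j : ℕ) * l k + t < ((j : ℕ) + 1) * l k := by
            rw [add_mul, one_mul]; omega
        _ ≤ (N - 1) * l k := Nat.mul_le_mul_right _ (by omega)
        _ = l k * (N - 1) := Nat.mul_comm _ _⟩
  else 0

def unpad {K : ℕ} (l : Fin K → ℕ) (N M : ℕ) (k : Fin K) (B : Fin (N - 1) → Fin M → ZMod 2) :
    Fin (l k * (N - 1)) → ZMod 2 :=
  fun i => if h : (i : ℕ) / l k < N - 1 ∧ (i : ℕ) % l k < M then B ⟨_, h.1⟩ ⟨_, h.2⟩ else 0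

lemma padW_bit {K : ℕ} (l : Fin K → ℕ) (N M : ℕ) (k : Fin K) (hl : 1 ≤ l k)
    (w : Fin (l k * (N - 1)) → ZMod 2) (i : Fin (l k * (N - 1)))
    (h1 : (i : ℕ) / l k < N - 1) (h2 : (i : ℕ) % l k < M) :
    padW l N M k w ⟨(i : ℕ) / l k, h1⟩ ⟨(i : ℕ) % l k, h2⟩ = w i := by
  unfold padW
  rw [dif_pos (Nat.mod_lt _ hl)]
  congr 1
  apply Fin.ext
  show (i : ℕ) / l k * l k + (i : ℕ) % l k = (i : ℕ)
  rw [Nat.mul_comm]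
  exact Nat.div_add_mod _ _

lemma div_lt_of_msg {K : ℕ} (l : Fin K → ℕ) (N : ℕ) (k : Fin K)
    (i : Fin (l k * (N - 1))) : (i : ℕ) / l k < N - 1 := by
  apply Nat.div_lt_of_lt_mul
  exact i.isLt

lemma unpad_padW {K : ℕ} (l : Fin K → ℕ) (N M : ℕ) (k : Fin K) (hl : 1 ≤ l k) (hlM : l k ≤ M)
    (w : Fin (l k * (N - 1)) → ZMod 2) : unpad l N M k (padW l N M k w) = w := by
  funext i
  have h1 : (i : ℕ) / l k < N - 1 := div_lt_of_msg l N k i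
  have h2 : (i : ℕ) % l k < M := lt_of_lt_of_le (Nat.mod_lt _ hl) hlM
  rw [unpad, dif_pos ⟨h1, h2⟩]
  exact padW_bit l N M k hl w i h1 h2

/-- the sample space -/
abbrev Om {K : ℕ} (l : Fin K → ℕ) (N M : ℕ) : Type :=
  (∀ k, Fin (l k * (N - 1)) → ZMod 2) × (Fin M → ZMod 2) × (Fin K → Fin (N - 1) → ZMod 2)

/-- indicator query -/
def eQ (K N : ℕ) (k : Fin K) (n : Fin N) : Fin K → Fin (N - 1) → ZMod 2 :=
  fun k' j => if k' = k ∧ (j : ℕ) = (n : ℕ) then 1 else 0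

def innerF {K : ℕ} (l : Fin K → ℕ) (N M : ℕ) (q : Fin K → Fin (N - 1) → ZMod 2)
    (w : ∀ k, Fin (l k * (N - 1)) → ZMod 2) : Fin M → ZMod 2 :=
  fun t => ∑ k', ∑ j, q k' j * padW l N M k' (w k') j t

def ansF {K : ℕ} (l : Fin K → ℕ) (N M : ℕ) (q : Fin K → Fin (N - 1) → ZMod 2)
    (w : ∀ k, Fin (l k * (N - 1)) → ZMod 2) (s : Fin M → ZMod 2) : Fin M → ZMod 2 :=
  fun t => innerF l N M q w t + s t

def Qf {K : ℕ} (l : Fin K → ℕ) (N M : ℕ) (k : Fin K) (n : Fin N) (ω : Om l N M) :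
    Fin K → Fin (N - 1) → ZMod 2 :=
  fun k' j => ω.2.2 k' j + eQ K N k n k' j

def Af {K : ℕ} (l : Fin K → ℕ) (N M : ℕ) (k : Fin K) (n : Fin N) (ω : Om l N M) :
    Fin M → ZMod 2 :=
  ansF l N M (Qf l N M k n ω) ω.1 ω.2.1

/-- the uniform pmf on the sample space -/
noncomputable def pp {K : ℕ} (l : Fin K → ℕ) (N M : ℕ) : Om l N M → ℝ :=
  fun _ => ((Fintype.card (Om l N M) : ℝ))⁻¹

lemma innerF_split {K : ℕ} (l : Fin K → ℕ) (N M : ℕ) (z e : Fin K → Fin (N - 1) → ZMod 2)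
    (w : ∀ k, Fin (l k * (N - 1)) → ZMod 2) (t : Fin M) :
    innerF l N M (fun k' j => z k' j + e k' j) w t = innerF l N M z w t + innerF l N M e w t := by
  unfold innerF
  rw [← Finset.sum_add_distrib]
  refine Finset.sum_congr rfl fun k' _ => ?_
  rw [← Finset.sum_add_distrib]
  exact Finset.sum_congr rfl fun j _ => by rw [add_mul]

lemma innerF_eQ {K : ℕ} (l : Fin K → ℕ) (N M : ℕ) (k : Fin K) (n : Fin N)
    (hn : (n : ℕ) < N - 1) (w : ∀ k, Fin (l k * (N - 1)) → ZMod 2) (t : Fin M) :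
    innerF l N M (eQ K N k n) w t = padW l N M k (w k) ⟨(n : ℕ), hn⟩ t := by
  unfold innerF eQ
  rw [Finset.sum_eq_single k]
  · rw [Finset.sum_eq_single (⟨(n : ℕ), hn⟩ : Fin (N - 1))]
    · rw [if_pos ⟨rfl, rfl⟩, one_mul]
    · intro j _ hj
      rw [if_neg, zero_mul]
      rintro ⟨-, hj'⟩
      exact hj (Fin.ext hj')
    · intro hmem; exact absurd (Finset.mem_univ _) hmem
  · intro k' _ hk'
    refine Finset.sum_eq_zero fun j _ => ?_
    rw [if_neg, zero_mul]
    rintro ⟨hk, -⟩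
    exact hk' hk
  · intro hmem; exact absurd (Finset.mem_univ _) hmem

lemma innerF_eQ_zero {K : ℕ} (l : Fin K → ℕ) (N M : ℕ) (k : Fin K) (n : Fin N)
    (hn : ¬ ((n : ℕ) < N - 1)) (w : ∀ k, Fin (l k * (N - 1)) → ZMod 2) (t : Fin M) :
    innerF l N M (eQ K N k n) w t = 0 := by
  unfold innerF eQ
  refine Finset.sum_eq_zero fun k' _ => Finset.sum_eq_zero fun j _ => ?_
  rw [if_neg, zero_mul]
  rintro ⟨-, hj⟩
  exact hn (hj ▸ j.isLt)

lemma Af_eval {K : ℕ} (l : Fin K → ℕ) (N M : ℕ) (k : Fin K) (n : Fin N) (ω : Om l N M)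
    (t : Fin M) :
    Af l N M k n ω t
      = innerF l N M ω.2.2 ω.1 t + innerF l N M (eQ K N k n) ω.1 t + ω.2.1 t := by
  show innerF l N M (Qf l N M k n ω) ω.1 t + ω.2.1 t = _
  rw [show Qf l N M k n ω = fun k' j => ω.2.2 k' j + eQ K N k n k' j from rfl,
    innerF_split]

lemma Af_eval' {K : ℕ} (l : Fin K → ℕ) (N M : ℕ) (k : Fin K) (n : Fin N)
    (w : ∀ k, Fin (l k * (N - 1)) → ZMod 2) (s : Fin M → ZMod 2)
    (z : Fin K → Fin (N - 1) → ZMod 2) (t : Fin M) :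
    Af l N M k n (w, s, z) t
      = innerF l N M z w t + innerF l N M (eQ K N k n) w t + s t :=
  Af_eval l N M k n (w, s, z) t

end SPIRAch
namespace SPIRAch

open SPIRAux

section ProbLemmas

variable {K : ℕ} (l : Fin K → ℕ) (N M : ℕ)

lemma pp_nonneg : ∀ ω : Om l N M, 0 ≤ pp l N M ω := by
  intro ω
  unfold pp
  positivity

lemma pp_sum : ∑ ω : Om l N M, pp l N M ω = 1 := by
  have h : (Fintype.card (Om l N M) : ℝ) ≠ 0 := Nat.cast_ne_zero.mpr Fintype.card_ne_zero
  unfold pp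
  rw [Finset.sum_const, Finset.card_univ, nsmul_eq_mul]
  exact mul_inv_cancel₀ h

lemma probW (k : Fin K) (a : Fin (l k * (N - 1)) → ZMod 2) :
    prob (pp l N M) (fun ω : Om l N M => ω.1 k) a
      = 1 / (Fintype.card (Fin (l k * (N - 1)) → ZMod 2) : ℝ) := by
  have e1 : prob (pp l N M) (fun ω : Om l N M => ω.1 k) a
      = ∑ ω : Om l N M, @ite _ (ω.1 k = a) (Classical.propDecidable _)
          ((Fintype.card (Om l N M) : ℝ))⁻¹ 0 := rfl
  rw [e1, sum_om_ite_fst (A := ∀ j, Fin (l j * (N - 1)) → ZMod 2) (B := Fin M → ZMod 2)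
    (C := Fin K → Fin (N - 1) → ZMod 2) (fun w => w k = a) _, sum_pi_ite]
  have h1 : Fintype.card (Om l N M)
      = Fintype.card (∀ j, Fin (l j * (N - 1)) → ZMod 2)
        * Fintype.card ((Fin M → ZMod 2) × (Fin K → Fin (N - 1) → ZMod 2)) :=
    Fintype.card_prod _ _
  have h2 : Fintype.card (∀ j, Fin (l j * (N - 1)) → ZMod 2)
      = Fintype.card (Fin (l k * (N - 1)) → ZMod 2)
        * Fintype.card (∀ j : {j // j ≠ k}, Fin (l j.1 * (N - 1)) → ZMod 2) := by
    rw [Fintype.card_congr (Equiv.piSplitAt k _), Fintype.card_prod]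
  have n1 : (Fintype.card (Fin (l k * (N - 1)) → ZMod 2) : ℝ) ≠ 0 :=
    Nat.cast_ne_zero.mpr Fintype.card_ne_zero
  have n2 : (Fintype.card (∀ j : {j // j ≠ k}, Fin (l j.1 * (N - 1)) → ZMod 2) : ℝ) ≠ 0 :=
    Nat.cast_ne_zero.mpr Fintype.card_ne_zero
  have n3 : (Fintype.card ((Fin M → ZMod 2) × (Fin K → Fin (N - 1) → ZMod 2)) : ℝ) ≠ 0 :=
    Nat.cast_ne_zero.mpr Fintype.card_ne_zero
  rw [h1, h2]
  push_cast
  field_simp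

lemma probS (s : Fin M → ZMod 2) :
    prob (pp l N M) (fun ω : Om l N M => ω.2.1) s
      = 1 / (Fintype.card (Fin M → ZMod 2) : ℝ) := by
  have e1 : prob (pp l N M) (fun ω : Om l N M => ω.2.1) s
      = ∑ ω : Om l N M, @ite _ (ω.2.1 = s) (Classical.propDecidable _)
          ((Fintype.card (Om l N M) : ℝ))⁻¹ 0 := rfl
  rw [e1, sum_om_ite_snd]
  have h1 : Fintype.card (Om l N M)
      = Fintype.card (∀ j, Fin (l j * (N - 1)) → ZMod 2)
        * (Fintype.card (Fin M → ZMod 2) * Fintype.card (Fin K → Fin (N - 1) → ZMod 2)) := by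
    rw [Fintype.card_prod, Fintype.card_prod]
  have n1 : (Fintype.card (∀ j, Fin (l j * (N - 1)) → ZMod 2) : ℝ) ≠ 0 :=
    Nat.cast_ne_zero.mpr Fintype.card_ne_zero
  have n2 : (Fintype.card (Fin M → ZMod 2) : ℝ) ≠ 0 :=
    Nat.cast_ne_zero.mpr Fintype.card_ne_zero
  have n3 : (Fintype.card (Fin K → Fin (N - 1) → ZMod 2) : ℝ) ≠ 0 :=
    Nat.cast_ne_zero.mpr Fintype.card_ne_zero
  rw [h1]
  push_cast
  field_simp

lemma probF (f : Fin K → Fin (N - 1) → ZMod 2) :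
    prob (pp l N M) (fun ω : Om l N M => ω.2.2) f
      = 1 / (Fintype.card (Fin K → Fin (N - 1) → ZMod 2) : ℝ) := by
  have e1 : prob (pp l N M) (fun ω : Om l N M => ω.2.2) f
      = ∑ ω : Om l N M, @ite _ (ω.2.2 = f) (Classical.propDecidable _)
          ((Fintype.card (Om l N M) : ℝ))⁻¹ 0 := rfl
  rw [e1, sum_om_ite_trd]
  have h1 : Fintype.card (Om l N M)
      = Fintype.card (∀ j, Fin (l j * (N - 1)) → ZMod 2)
        * (Fintype.card (Fin M → ZMod 2) * Fintype.card (Fin K → Fin (N - 1) → ZMod 2)) := by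
    rw [Fintype.card_prod, Fintype.card_prod]
  have n1 : (Fintype.card (∀ j, Fin (l j * (N - 1)) → ZMod 2) : ℝ) ≠ 0 :=
    Nat.cast_ne_zero.mpr Fintype.card_ne_zero
  have n2 : (Fintype.card (Fin M → ZMod 2) : ℝ) ≠ 0 :=
    Nat.cast_ne_zero.mpr Fintype.card_ne_zero
  have n3 : (Fintype.card (Fin K → Fin (N - 1) → ZMod 2) : ℝ) ≠ 0 :=
    Nat.cast_ne_zero.mpr Fintype.card_ne_zero
  rw [h1]
  push_cast
  field_simp

lemma indep (w : ∀ k, Fin (l k * (N - 1)) → ZMod 2) (s : Fin M → ZMod 2)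
    (f : Fin K → Fin (N - 1) → ZMod 2) :
    prob (pp l N M) (fun ω : Om l N M => ((fun k => ω.1 k), ω.2.1, ω.2.2)) (w, s, f)
      = (∏ k, prob (pp l N M) (fun ω : Om l N M => ω.1 k) (w k))
        * prob (pp l N M) (fun ω : Om l N M => ω.2.1) s
        * prob (pp l N M) (fun ω : Om l N M => ω.2.2) f := by
  rw [prob_eq_single (pp l N M) _ _ (w, s, f) (fun ω => Iff.rfl), probS, probF,
    Finset.prod_congr rfl fun k _ => probW l N M k (w k)]
  have h1 : Fintype.card (Om l N M)
      = (∏ k, Fintype.card (Fin (l k * (N - 1)) → ZMod 2))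
        * (Fintype.card (Fin M → ZMod 2) * Fintype.card (Fin K → Fin (N - 1) → ZMod 2)) := by
    rw [Fintype.card_prod, Fintype.card_prod, Fintype.card_pi]
  show ((Fintype.card (Om l N M) : ℝ))⁻¹ = _
  rw [h1]
  push_cast
  simp only [one_div, mul_inv]
  rw [Finset.prod_inv_distrib]
  ring

end ProbLemmas

end SPIRAch
namespace SPIRAch

open SPIRAux

section MainLemmas

variable {K : ℕ} (l : Fin K → ℕ) (N M : ℕ)

lemma userview (k : Fin K) (n : Fin N) (q : Fin K → Fin (N - 1) → ZMod 2) (a : Fin M → ZMod 2)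
    (w : ∀ k, Fin (l k * (N - 1)) → ZMod 2) (s : Fin M → ZMod 2) :
    prob (pp l N M)
      (fun ω : Om l N M => (Qf l N M k n ω, Af l N M k n ω, (fun j => ω.1 j), ω.2.1))
      (q, a, w, s)
      = if a = ansF l N M q w s then ((Fintype.card (Om l N M) : ℝ))⁻¹ else 0 := by
  by_cases h : a = ansF l N M q w s
  · rw [if_pos h]
    refine prob_eq_single _ _ _ (w, s, fun k' j => q k' j + eQ K N k n k' j) (fun ω => ?_)
    obtain ⟨w', s', z'⟩ := ω
    dsimp only
    constructor
    · intro hh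
      rw [Prod.mk.injEq, Prod.mk.injEq, Prod.mk.injEq] at hh
      obtain ⟨hq, -, hw, hs⟩ := hh
      have hz : z' = fun k' j => q k' j + eQ K N k n k' j := by
        funext k' j
        have h1 := congrFun (congrFun hq k') j
        rw [← h1]
        exact (z2a _ _).symm
      rw [Prod.mk.injEq, Prod.mk.injEq]
      exact ⟨hw, hs, hz⟩
    · intro hh
      rw [Prod.mk.injEq, Prod.mk.injEq] at hh
      obtain ⟨hw, hs, hz⟩ := hh
      subst hw; subst hs; subst hz
      have hqq : Qf l N M k n (w', s', fun k' j => q k' j + eQ K N k n k' j) = q :=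
        funext fun k' => funext fun j => z2a (q k' j) (eQ K N k n k' j)
      rw [Prod.mk.injEq, Prod.mk.injEq, Prod.mk.injEq]
      refine ⟨hqq, ?_, rfl, rfl⟩
      rw [show Af l N M k n (w', s', fun k' j => q k' j + eQ K N k n k' j)
          = ansF l N M (Qf l N M k n (w', s', fun k' j => q k' j + eQ K N k n k' j)) w' s'
          from rfl, hqq, ← h]
  · rw [if_neg h]
    refine prob_eq_zero _ _ _ (fun ω hh => ?_)
    rw [Prod.mk.injEq, Prod.mk.injEq, Prod.mk.injEq] at hh
    obtain ⟨hq, ha, hw, hs⟩ := hh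
    apply h
    have hw' : ω.1 = w := hw
    rw [← ha, show Af l N M k n ω = ansF l N M (Qf l N M k n ω) ω.1 ω.2.1 from rfl,
      hq, hs, hw']

lemma correct (k : Fin K) (hl : 1 ≤ l k) (ω : Om l N M)
    (i : Fin (l k * (N - 1)))
    (hdiv : (i : ℕ) / l k < N) (hlast : N - 1 < N) (ht : (i : ℕ) % l k < M) :
    ω.1 k i = Af l N M k ⟨(i : ℕ) / l k, hdiv⟩ ω ⟨(i : ℕ) % l k, ht⟩
      + Af l N M k ⟨N - 1, hlast⟩ ω ⟨(i : ℕ) % l k, ht⟩ := by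
  rw [Af_eval, Af_eval,
    innerF_eQ l N M k ⟨(i : ℕ) / l k, hdiv⟩ (div_lt_of_msg l N k i) ω.1,
    innerF_eQ_zero l N M k ⟨N - 1, hlast⟩ (show ¬(N - 1 < N - 1) by omega) ω.1,
    z2f]
  exact (padW_bit l N M k hl (ω.1 k) i (div_lt_of_msg l N k i) ht).symm

/-- the "last database" index -/
def lastN (N : ℕ) (hN : 2 ≤ N) : Fin N := ⟨N - 1, by omega⟩

/-- candidate padded message reconstructed from the answers -/
def Bfun (hN : 2 ≤ N) (af : Fin N → Fin M → ZMod 2) : Fin (N - 1) → Fin M → ZMod 2 :=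
  fun j t => af ⟨(j : ℕ), lt_of_lt_of_le j.isLt (Nat.sub_le N 1)⟩ t + af (lastN N hN) t

/-- the common randomness determined by the messages and the view -/
def sfn (hN : 2 ≤ N) (af : Fin N → Fin M → ZMod 2) (f : Fin K → Fin (N - 1) → ZMod 2)
    (w : ∀ k, Fin (l k * (N - 1)) → ZMod 2) : Fin M → ZMod 2 :=
  fun t => af (lastN N hN) t + innerF l N M f w t

/-- consistency of a candidate view -/
def chi (hN : 2 ≤ N) (k : Fin K) (qf : Fin N → Fin K → Fin (N - 1) → ZMod 2)
    (af : Fin N → Fin M → ZMod 2) (f : Fin K → Fin (N - 1) → ZMod 2) : Prop :=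
  (qf = fun n => fun k' j => f k' j + eQ K N k n k' j)
    ∧ (∀ j t, padW l N M k (unpad l N M k (Bfun N M hN af)) j t = Bfun N M hN af j t)

lemma Yiff (hN : 2 ≤ N) (k : Fin K) (hl : 1 ≤ l k) (hlM : l k ≤ M)
    (qf : Fin N → Fin K → Fin (N - 1) → ZMod 2) (af : Fin N → Fin M → ZMod 2)
    (f : Fin K → Fin (N - 1) → ZMod 2) (ω : Om l N M) :
    ((fun n => Qf l N M k n ω), (fun n => Af l N M k n ω), ω.2.2) = (qf, af, f)
      ↔ (ω.1 k = unpad l N M k (Bfun N M hN af)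
          ∧ ω.2.1 = sfn l N M hN af f ω.1 ∧ ω.2.2 = f) ∧ chi l N M hN k qf af f := by
  obtain ⟨w', s', z'⟩ := ω
  dsimp only
  constructor
  · intro h
    rw [Prod.mk.injEq, Prod.mk.injEq] at h
    obtain ⟨hq, ha, hz⟩ := h
    rw [hz] at hq ha
    have haf : ∀ n, Af l N M k n (w', s', f) = af n := fun n => congrFun ha n
    have hs : s' = sfn l N M hN af f w' := by
      funext t
      have h1 := congrFun (haf (lastN N hN)) t
      rw [Af_eval', innerF_eQ_zero l N M k (lastN N hN) (show ¬(N - 1 < N - 1) by omega)] at h1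
      exact z2b _ _ _ h1
    have hpad : ∀ (j : Fin (N - 1)) (t : Fin M),
        padW l N M k (w' k) j t = Bfun N M hN af j t := by
      intro j t
      have h2 := congrFun (haf ⟨(j : ℕ), lt_of_lt_of_le j.isLt (Nat.sub_le N 1)⟩) t
      rw [Af_eval', innerF_eQ l N M k _ (show (j : ℕ) < N - 1 from j.isLt),
        congrFun hs t] at h2
      exact z2c _ _ _ _ h2
    have hwk : w' k = unpad l N M k (Bfun N M hN af) := by
      have hBf : Bfun N M hN af = padW l N M k (w' k) :=
        funext fun j => funext fun t => (hpad j t).symm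
      rw [hBf, unpad_padW l N M k hl hlM]
    refine ⟨⟨hwk, hs, hz⟩, hq.symm, fun j t => ?_⟩
    rw [← hwk]
    exact hpad j t
  · rintro ⟨⟨hwk, hs, hz⟩, hχ1, hχ2⟩
    rw [Prod.mk.injEq, Prod.mk.injEq]
    refine ⟨?_, ?_, hz⟩
    · rw [hχ1]
      funext n
      funext k' j
      show z' k' j + eQ K N k n k' j = f k' j + eQ K N k n k' j
      rw [hz]
    · funext n
      funext t
      rw [Af_eval', hz, hs]
      by_cases hn : (n : ℕ) < N - 1
      · rw [innerF_eQ l N M k n hn, hwk, hχ2 ⟨(n : ℕ), hn⟩ t]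
        exact z2d _ _ _
      · rw [innerF_eQ_zero l N M k n hn]
        have hn' : n = lastN N hN := Fin.ext (by have := n.isLt; simp only [lastN]; omega)
        rw [hn']
        exact z2e _ _

lemma dbPriv (hN : 2 ≤ N) (hl : ∀ k, 1 ≤ l k) (hlM : ∀ k, l k ≤ M) (k : Fin K) :
    mutInfo (pp l N M) (fun ω : Om l N M => (fun j : {j : Fin K // j ≠ k} => ω.1 j.1))
      (fun ω : Om l N M => ((fun n => Qf l N M k n ω), (fun n => Af l N M k n ω), ω.2.2))
      = 0 := by
  apply mutInfo_eq_zero_of_indep _ _ _ (pp_sum l N M)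
  rintro x ⟨qf, af, f⟩
  have hXprob : prob (pp l N M) (fun ω : Om l N M => (fun j : {j : Fin K // j ≠ k} => ω.1 j.1)) x
      = (Fintype.card (Fin (l k * (N - 1)) → ZMod 2) : ℝ)
        * ((Fintype.card ((Fin M → ZMod 2) × (Fin K → Fin (N - 1) → ZMod 2)) : ℝ)
          * ((Fintype.card (Om l N M) : ℝ))⁻¹) := by
    have e1 : prob (pp l N M) (fun ω : Om l N M => (fun j : {j : Fin K // j ≠ k} => ω.1 j.1)) x
        = ∑ ω : Om l N M, @ite _ ((fun j : {j : Fin K // j ≠ k} => ω.1 j.1) = x)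
            (Classical.propDecidable _) ((Fintype.card (Om l N M) : ℝ))⁻¹ 0 := rfl
    rw [e1, sum_om_ite_fst (A := ∀ j, Fin (l j * (N - 1)) → ZMod 2) (B := Fin M → ZMod 2)
      (C := Fin K → Fin (N - 1) → ZMod 2)
      (fun w => (fun j : {j : Fin K // j ≠ k} => w j.1) = x) _, sum_pi_ite_sub]
  have hYprob : prob (pp l N M)
      (fun ω : Om l N M => ((fun n => Qf l N M k n ω), (fun n => Af l N M k n ω), ω.2.2))
      (qf, af, f)
      = if chi l N M hN k qf af f then
          (Fintype.card (∀ j : {j : Fin K // j ≠ k}, Fin (l j.1 * (N - 1)) → ZMod 2) : ℝ)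
            * ((Fintype.card (Om l N M) : ℝ))⁻¹ else 0 := by
    by_cases hχ : chi l N M hN k qf af f
    · rw [if_pos hχ]
      have e1 : prob (pp l N M)
          (fun ω : Om l N M => ((fun n => Qf l N M k n ω), (fun n => Af l N M k n ω), ω.2.2))
          (qf, af, f)
          = ∑ ω : Om l N M, @ite _
              (ω.1 k = unpad l N M k (Bfun N M hN af)
                ∧ ω.2.1 = sfn l N M hN af f ω.1 ∧ ω.2.2 = f)
              (Classical.propDecidable _) ((Fintype.card (Om l N M) : ℝ))⁻¹ 0 := by
        refine Finset.sum_congr rfl fun ω _ => ?_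
        by_cases hω : ω.1 k = unpad l N M k (Bfun N M hN af)
            ∧ ω.2.1 = sfn l N M hN af f ω.1 ∧ ω.2.2 = f
        · rw [if_pos hω, if_pos ((Yiff l N M hN k (hl k) (hlM k) qf af f ω).2 ⟨hω, hχ⟩)]
          rfl
        · rw [if_neg hω,
            if_neg (fun hh => hω ((Yiff l N M hN k (hl k) (hlM k) qf af f ω).1 hh).1)]
      rw [e1, sum_om_ite (A := ∀ j, Fin (l j * (N - 1)) → ZMod 2) (B := Fin M → ZMod 2)
        (C := Fin K → Fin (N - 1) → ZMod 2)
        (fun w => w k = unpad l N M k (Bfun N M hN af)) (fun w => sfn l N M hN af f w) f _,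
        sum_pi_ite]
    · rw [if_neg hχ]
      exact prob_eq_zero _ _ _
        (fun ω hh => hχ ((Yiff l N M hN k (hl k) (hlM k) qf af f ω).1 hh).2)
  have hPairprob : prob (pp l N M)
      (fun ω : Om l N M => ((fun j : {j : Fin K // j ≠ k} => ω.1 j.1),
        ((fun n => Qf l N M k n ω), (fun n => Af l N M k n ω), ω.2.2)))
      (x, (qf, af, f))
      = if chi l N M hN k qf af f then ((Fintype.card (Om l N M) : ℝ))⁻¹ else 0 := by
    by_cases hχ : chi l N M hN k qf af f
    · rw [if_pos hχ]
      obtain ⟨w₀, hw₀⟩ : ∃ w₀, w₀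
          = (Equiv.piSplitAt k (fun j => Fin (l j * (N - 1)) → ZMod 2)).symm
            (unpad l N M k (Bfun N M hN af), x) := ⟨_, rfl⟩
      refine prob_eq_single _ _ _ (w₀, sfn l N M hN af f w₀, f) (fun ω => ?_)
      obtain ⟨w', s', z'⟩ := ω
      dsimp only
      constructor
      · intro h
        rw [Prod.mk.injEq] at h
        obtain ⟨hx, hy⟩ := h
        obtain ⟨⟨hwk, hs, hz⟩, -⟩ := (Yiff l N M hN k (hl k) (hlM k) qf af f (w', s', z')).1 hy
        have hw' : w' = w₀ := by
          rw [hw₀]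
          funext j
          by_cases hj : j = k
          · subst hj
            rw [piSplitAt_symm_same (fun j => Fin (l j * (N - 1)) → ZMod 2) j _ x]
            exact hwk
          · rw [piSplitAt_symm_other (fun j => Fin (l j * (N - 1)) → ZMod 2) k _ x j hj]
            exact congrFun hx ⟨j, hj⟩
        rw [Prod.mk.injEq, Prod.mk.injEq]
        exact ⟨hw', hs.trans (congrArg (sfn l N M hN af f) hw'), hz⟩
      · intro h
        rw [Prod.mk.injEq, Prod.mk.injEq] at h
        obtain ⟨h1, h2, h3⟩ := h
        rw [Prod.mk.injEq]
        constructor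
        · rw [h1, hw₀]
          exact piSplitAt_symm_sub (fun j => Fin (l j * (N - 1)) → ZMod 2) k _ x
        · apply (Yiff l N M hN k (hl k) (hlM k) qf af f (w', s', z')).2
          refine ⟨⟨?_, ?_, h3⟩, hχ⟩
          · rw [h1, hw₀]
            exact piSplitAt_symm_same (fun j => Fin (l j * (N - 1)) → ZMod 2) k _ x
          · rw [h2, h1]
    · rw [if_neg hχ]
      refine prob_eq_zero _ _ _ (fun ω hh => ?_)
      rw [Prod.mk.injEq] at hh
      exact hχ ((Yiff l N M hN k (hl k) (hlM k) qf af f ω).1 hh.2).2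
  rw [hPairprob, hXprob, hYprob]
  have h1 : Fintype.card (Om l N M)
      = Fintype.card (∀ j, Fin (l j * (N - 1)) → ZMod 2)
        * Fintype.card ((Fin M → ZMod 2) × (Fin K → Fin (N - 1) → ZMod 2)) :=
    Fintype.card_prod _ _
  have h2 : Fintype.card (∀ j, Fin (l j * (N - 1)) → ZMod 2)
      = Fintype.card (Fin (l k * (N - 1)) → ZMod 2)
        * Fintype.card (∀ j : {j : Fin K // j ≠ k}, Fin (l j.1 * (N - 1)) → ZMod 2) := by
    rw [Fintype.card_congr (Equiv.piSplitAt k _), Fintype.card_prod]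
  have n1 : (Fintype.card (Fin (l k * (N - 1)) → ZMod 2) : ℝ) ≠ 0 :=
    Nat.cast_ne_zero.mpr Fintype.card_ne_zero
  have n2 : (Fintype.card (∀ j : {j : Fin K // j ≠ k}, Fin (l j.1 * (N - 1)) → ZMod 2) : ℝ) ≠ 0 :=
    Nat.cast_ne_zero.mpr Fintype.card_ne_zero
  have n3 : (Fintype.card ((Fin M → ZMod 2) × (Fin K → Fin (N - 1) → ZMod 2)) : ℝ) ≠ 0 :=
    Nat.cast_ne_zero.mpr Fintype.card_ne_zero
  by_cases hχ : chi l N M hN k qf af f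
  · rw [if_pos hχ, if_pos hχ, h1, h2]
    push_cast
    field_simp
  · rw [if_neg hχ, if_neg hχ, mul_zero]

lemma entS : ent (pp l N M) (fun ω : Om l N M => ω.2.1) = (M : ℝ) := by
  unfold ent
  rw [Finset.sum_congr rfl fun s _ => by rw [probS l N M s]]
  rw [Finset.sum_const, Finset.card_univ, nsmul_eq_mul]
  have hcard : Fintype.card (Fin M → ZMod 2) = 2 ^ M := by
    rw [Fintype.card_fun, Fintype.card_fin]
    norm_num
  rw [hcard]
  have h2 : ((2 ^ M : ℕ) : ℝ) = (2 : ℝ) ^ M := by push_cast; ring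
  rw [h2]
  have hne : (2 : ℝ) ^ M ≠ 0 := by positivity
  have hlog : Real.logb 2 ((2 : ℝ) ^ M) = (M : ℝ) := by
    rw [Real.logb_pow, Real.logb_self_eq_one (b := 2) (by norm_num), mul_one]
  rw [one_div, Real.logb_inv, hlog]
  field_simp

end MainLemmas

end SPIRAch
/-- (Achievability for the SPIR capacity region.) For all `K ≥ 2`,
`N ≥ 2` and positive integers `l_1 ≤ l_2 ≤ ⋯ ≤ l_K`, there exists a zero-error SPIR scheme
with unequal message sizes, with `L = N − 1`, total download `D = l_K · N` bits and common
randomness entropy `H(S) = l_K` bits; hence it achieves the rate tuple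
`R_k = l_k·L/D = (l_k/l_K)(1 − 1/N)` with `ρ = H(S)/(l_K·L) = 1/(N−1)`. -/
theorem spir_region_achievability (K N : ℕ) (hK : 2 ≤ K) (hN : 2 ≤ N)
    (l : Fin K → ℕ) (hl : ∀ k, 1 ≤ l k) (hmono : Monotone l) :
    ∃ (d : Fin N → ℕ) (sch : RegionSPIR K N (N - 1) l d),
      (∑ n, d n) = l ⟨K - 1, by omega⟩ * N ∧
      ent sch.p sch.S = (l ⟨K - 1, by omega⟩ : ℝ) := by
  have hK1 : K - 1 < K := by omega
  have hlM : ∀ k, l k ≤ l ⟨K - 1, hK1⟩ := by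
    intro k
    refine hmono ?_
    rw [Fin.le_def]
    show (k : ℕ) ≤ K - 1
    have := k.isLt; omega
  refine ⟨fun _ => l ⟨K - 1, hK1⟩,
    { Ω := SPIRAch.Om l N (l ⟨K - 1, hK1⟩)
      p := SPIRAch.pp l N (l ⟨K - 1, hK1⟩)
      p_nonneg := SPIRAch.pp_nonneg l N (l ⟨K - 1, hK1⟩)
      p_sum := SPIRAch.pp_sum l N (l ⟨K - 1, hK1⟩)
      𝓢 := Fin (l ⟨K - 1, hK1⟩) → ZMod 2
      𝓕 := Fin K → Fin (N - 1) → ZMod 2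
      𝓠 := fun _ => Fin K → Fin (N - 1) → ZMod 2
      W := fun k ω => ω.1 k
      S := fun ω => ω.2.1
      F := fun ω => ω.2.2
      Q := fun k n ω => SPIRAch.Qf l N (l ⟨K - 1, hK1⟩) k n ω
      A := fun k n ω => SPIRAch.Af l N (l ⟨K - 1, hK1⟩) k n ω
      hWunif := fun k a => SPIRAch.probW l N (l ⟨K - 1, hK1⟩) k a
      hIndep := fun w s f => SPIRAch.indep l N (l ⟨K - 1, hK1⟩) w s f
      hQ := fun k n =>
        ⟨fun f0 => fun k' j => f0 k' j + SPIRAch.eQ K N k n k' j, fun ω => rfl⟩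
      hA := fun k n => ⟨fun q w s => SPIRAch.ansF l N (l ⟨K - 1, hK1⟩) q w s, fun ω => rfl⟩
      hCorrect := fun k =>
        ⟨fun a _ => fun i =>
          a ⟨(i : ℕ) / l k, by
              have := SPIRAch.div_lt_of_msg l N k i; omega⟩
            ⟨(i : ℕ) % l k, by
              have h1 := Nat.mod_lt (i : ℕ) (hl k); have h2 := hlM k; omega⟩
          + a ⟨N - 1, by omega⟩
            ⟨(i : ℕ) % l k, by
              have h1 := Nat.mod_lt (i : ℕ) (hl k); have h2 := hlM k; omega⟩,
          fun ω => funext fun i => SPIRAch.correct l N (l ⟨K - 1, hK1⟩) k (hl k) ω i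
            (by have := SPIRAch.div_lt_of_msg l N k i; omega) (by omega)
            (by have h1 := Nat.mod_lt (i : ℕ) (hl k); have h2 := hlM k; omega)⟩
      hUserPriv := fun n k k' => by
        rintro ⟨q, a, w, s⟩
        rw [show prob (SPIRAch.pp l N (l ⟨K - 1, hK1⟩))
            (fun ω => (SPIRAch.Qf l N (l ⟨K - 1, hK1⟩) k n ω,
              SPIRAch.Af l N (l ⟨K - 1, hK1⟩) k n ω, (fun j => ω.1 j), ω.2.1)) (q, a, w, s)
            = _ from SPIRAch.userview l N (l ⟨K - 1, hK1⟩) k n q a w s,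
          show prob (SPIRAch.pp l N (l ⟨K - 1, hK1⟩))
            (fun ω => (SPIRAch.Qf l N (l ⟨K - 1, hK1⟩) k' n ω,
              SPIRAch.Af l N (l ⟨K - 1, hK1⟩) k' n ω, (fun j => ω.1 j), ω.2.1)) (q, a, w, s)
            = _ from SPIRAch.userview l N (l ⟨K - 1, hK1⟩) k' n q a w s]
      hDBPriv := fun k => SPIRAch.dbPriv l N (l ⟨K - 1, hK1⟩) hN hl hlM k }, ?_, ?_⟩
  · rw [Finset.sum_const, Finset.card_univ, Fintype.card_fin, smul_eq_mul]
    exact Nat.mul_comm _ _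
  · exact SPIRAch.entS l N (l ⟨K - 1, hK1⟩)
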